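/- Let m be a Borel measure on ℝ^d \ {0} with m({‖ξ‖ > 1}) < ∞ and ∫_{‖ξ‖>1} log‖ξ‖ m(dξ) < ∞. Let ψ : [0,∞) → ℂ^d satisfy ‖ψ(s)‖ ≤ c₁ e^{−c₂ s} and Re⟨ξ, ψ(s)⟩ ≤ 0 for all s ≥ 0 and all ξ with ‖ξ‖ > 1. Then ∫₀^∞ ∫_{‖ξ‖>1} |e^{⟨ξ,ψ(s)⟩} − 1| m(dξ) ds ≤ (c₁/c₂) m({‖ξ‖>1}) + (2/c₂) ∫_{‖ξ‖>1} log‖ξ‖ m(dξ) < ∞. -/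

import Mathlib

/-!
For `Re z ≤ 0` one has `‖e^z - 1‖ ≤ min 2 ‖z‖`, and `|⟨ξ, ψ(s)⟩| ≤ c₁ ‖ξ‖ e^{-c₂ s}`.
Integrating this majorant in `s`, with the bound `2` up to the time `s₀ = log ‖ξ‖ / c₂` at which
`c₁ ‖ξ‖ e^{-c₂ s}` has decayed to `c₁` and the exponential afterwards, gives
`c₁ / c₂ + (2 / c₂) log ‖ξ‖`. The majorant is continuous in `(s, ξ)`, so Tonelli's theorem
integrates it over `ξ`, and the iterated integral of `|e^{⟨ξ,ψ(s)⟩} - 1|` is bounded by the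
iterated lower Lebesgue integral of the majorant.
-/

open MeasureTheory Set

noncomputable instance (d : ℕ) : MeasurableSpace (EuclideanSpace ℂ (Fin d)) :=
  MeasurableSpace.comap (WithLp.ofLp : EuclideanSpace ℂ (Fin d) → (Fin d → ℂ)) MeasurableSpace.pi

namespace Complex

lemma norm_exp_sub_one_le_of_re_nonpos {z : ℂ} (hz : z.re ≤ 0) :
    ‖exp z - 1‖ ≤ ‖z‖ := by
  have hderiv : ∀ w ∈ {w : ℂ | w.re ≤ 0}, ‖deriv exp w‖ ≤ 1 := fun w hw => by
    simpa [norm_exp] using hw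
  simpa using (convex_halfSpace_re_le 0).norm_image_sub_le_of_norm_deriv_le
    (fun _ _ => differentiableAt_exp) hderiv (by simp : (0 : ℂ) ∈ {w : ℂ | w.re ≤ 0}) hz

lemma norm_exp_sub_one_le_two_of_re_nonpos {z : ℂ} (hz : z.re ≤ 0) : ‖exp z - 1‖ ≤ 2 :=
  calc ‖exp z - 1‖ ≤ ‖exp z‖ + ‖(1 : ℂ)‖ := norm_sub_le _ _
    _ ≤ 1 + 1 := by
      gcongr
      · simpa [norm_exp] using hz
      · simp
    _ = 2 := by norm_num

lemma norm_exp_sub_one_le_min_of_re_nonpos {z : ℂ} (hz : z.re ≤ 0) :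
    ‖exp z - 1‖ ≤ min 2 ‖z‖ :=
  le_min (norm_exp_sub_one_le_two_of_re_nonpos hz) (norm_exp_sub_one_le_of_re_nonpos hz)

end Complex

lemma EuclideanSpace.norm_sum_ofReal_mul_le {ι : Type*} [Fintype ι] (ξ : EuclideanSpace ℝ ι)
    (v : EuclideanSpace ℂ ι) : ‖∑ i, (ξ i : ℂ) * v i‖ ≤ ‖ξ‖ * ‖v‖ :=
  calc ‖∑ i, (ξ i : ℂ) * v i‖ ≤ ∑ i, ‖ξ i‖ * ‖v i‖ := by
        simpa only [norm_mul, Complex.norm_real] using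
          norm_sum_le Finset.univ fun i => (ξ i : ℂ) * v i
    _ ≤ √(∑ i, ‖ξ i‖ ^ 2) * √(∑ i, ‖v i‖ ^ 2) :=
        Real.sum_mul_le_sqrt_mul_sqrt _ _ _
    _ = ‖ξ‖ * ‖v‖ := by rw [EuclideanSpace.norm_eq, EuclideanSpace.norm_eq]

lemma EuclideanSpace.norm_cexp_sum_ofReal_mul_sub_one_le {ι : Type*} [Fintype ι]
    {ξ : EuclideanSpace ℝ ι} {v : EuclideanSpace ℂ ι} (hre : (∑ i, (ξ i : ℂ) * v i).re ≤ 0) :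
    ‖Complex.exp (∑ i, (ξ i : ℂ) * v i) - 1‖ ≤ min 2 (‖ξ‖ * ‖v‖) :=
  (Complex.norm_exp_sub_one_le_min_of_re_nonpos hre).trans <|
    min_le_min_left _ (norm_sum_ofReal_mul_le ξ v)

lemma setLIntegral_ofReal_const_add_mul {α : Type*} [MeasurableSpace α] {μ : Measure α}
    {s : Set α} {h : α → ℝ} {a b : ℝ} (hs : MeasurableSet s) (hμs : μ s ≠ ⊤)
    (hh : IntegrableOn h s μ) (hnonneg : ∀ x ∈ s, 0 ≤ a + b * h x) :
    ∫⁻ x in s, ENNReal.ofReal (a + b * h x) ∂μ =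
      ENNReal.ofReal (a * (μ s).toReal + b * ∫ x in s, h x ∂μ) := by
  have : IsFiniteMeasure (μ.restrict s) := isFiniteMeasure_restrict.2 hμs
  rw [← ofReal_integral_eq_lintegral_ofReal (f := fun x => a + b * h x)
    ((integrable_const _).add (hh.const_mul _)) (ae_restrict_of_forall_mem hs hnonneg),
    integral_add (integrable_const _) (hh.const_mul _), setIntegral_const,
    integral_const_mul, measureReal_def, smul_eq_mul, mul_comm]

lemma enorm_integral_integral_le_lintegral_lintegral_enorm {α β E : Type*} [MeasurableSpace α]
    [MeasurableSpace β] [NormedAddCommGroup E] [NormedSpace ℝ E] {μ : Measure α}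
    {ν : Measure β} (f : α → β → E) :
    ‖∫ a, ∫ b, f a b ∂ν ∂μ‖ₑ ≤ ∫⁻ a, ∫⁻ b, ‖f a b‖ₑ ∂ν ∂μ :=
  (enorm_integral_le_lintegral_enorm _).trans <|
    lintegral_mono fun _ => enorm_integral_le_lintegral_enorm _

lemma lintegral_Ioi_ofReal_mul_exp_neg {a c : ℝ} (ha : 0 ≤ a) (hc : 0 < c) (t : ℝ) :
    ∫⁻ s in Ioi t, ENNReal.ofReal (a * Real.exp (-c * s)) =
      ENNReal.ofReal (a * Real.exp (-c * t) / c) := by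
  have hint : IntegrableOn (fun s => a * Real.exp (-c * s)) (Ioi t) :=
    (integrableOn_exp_mul_Ioi (neg_neg_of_pos hc) t).const_mul a
  rw [← ofReal_integral_eq_lintegral_ofReal hint (ae_of_all _ fun s => by positivity),
    integral_const_mul, integral_exp_mul_Ioi (neg_neg_of_pos hc)]
  congr 1
  field_simp

lemma lintegral_Ioi_ofReal_min_two_mul_exp_neg_le {c₁ c₂ r : ℝ} (hc₁ : 0 ≤ c₁)
    (hc₂ : 0 < c₂) (hr : 1 ≤ r) :
    ∫⁻ s in Ioi 0, ENNReal.ofReal (min 2 (c₁ * r * Real.exp (-c₂ * s))) ≤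
      ENNReal.ofReal (c₁ / c₂ + 2 / c₂ * Real.log r) := by
  set s₀ := Real.log r / c₂
  have hs₀ : 0 ≤ s₀ := div_nonneg (Real.log_nonneg hr) hc₂.le
  have hhead : ∫⁻ s in Ioc 0 s₀, ENNReal.ofReal (min 2 (c₁ * r * Real.exp (-c₂ * s))) ≤
      ENNReal.ofReal (2 * s₀) :=
    calc _ ≤ ∫⁻ _ in Ioc 0 s₀, ENNReal.ofReal 2 :=
          lintegral_mono fun s => ENNReal.ofReal_le_ofReal (min_le_left _ _)
      _ = ENNReal.ofReal (2 * s₀) := by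
        rw [setLIntegral_const, Real.volume_Ioc, sub_zero, ENNReal.ofReal_mul zero_le_two]
  have htail : ∫⁻ s in Ioi s₀, ENNReal.ofReal (min 2 (c₁ * r * Real.exp (-c₂ * s))) ≤
      ENNReal.ofReal (c₁ / c₂) :=
    calc _ ≤ ∫⁻ s in Ioi s₀, ENNReal.ofReal (c₁ * r * Real.exp (-c₂ * s)) :=
          lintegral_mono fun s => ENNReal.ofReal_le_ofReal (min_le_right _ _)
      _ = ENNReal.ofReal (c₁ / c₂) := by
        have hdecayed : Real.exp (-c₂ * s₀) = r⁻¹ := by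
          rw [neg_mul, mul_div_cancel₀ _ hc₂.ne', Real.exp_neg, Real.exp_log (by linarith)]
        rw [lintegral_Ioi_ofReal_mul_exp_neg (by positivity) hc₂, hdecayed]
        congr 1
        field_simp
  rw [← Ioc_union_Ioi_eq_Ioi hs₀, lintegral_union measurableSet_Ioi (Ioc_disjoint_Ioi le_rfl)]
  calc _ ≤ ENNReal.ofReal (2 * s₀) + ENNReal.ofReal (c₁ / c₂) := add_le_add hhead htail
    _ = ENNReal.ofReal (c₁ / c₂ + 2 / c₂ * Real.log r) := by
      rw [← ENNReal.ofReal_add (by positivity) (by positivity)]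
      congr 1
      ring

lemma lintegral_Ioi_lintegral_ofReal_min_two_mul_exp_neg_le {E : Type*} [NormedAddCommGroup E]
    [MeasurableSpace E] [OpensMeasurableSpace E] {μ : Measure E} [SFinite μ] {c₁ c₂ : ℝ}
    (hc₁ : 0 ≤ c₁) (hc₂ : 0 < c₂) (hμ : ∀ᵐ ξ ∂μ, 1 ≤ ‖ξ‖) :
    ∫⁻ s in Ioi 0, ∫⁻ ξ, ENNReal.ofReal (min 2 (c₁ * ‖ξ‖ * Real.exp (-c₂ * s))) ∂μ ≤
      ∫⁻ ξ, ENNReal.ofReal (c₁ / c₂ + 2 / c₂ * Real.log ‖ξ‖) ∂μ := by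
  rw [lintegral_lintegral_swap (by fun_prop)]
  exact lintegral_mono_ae <| hμ.mono fun ξ hξ =>
    lintegral_Ioi_ofReal_min_two_mul_exp_neg_le hc₁ hc₂ hξ

theorem stmt6_general (d : ℕ) (c₁ c₂ : ℝ) (hc₁ : 0 < c₁) (hc₂ : 0 < c₂)
    (m : Measure (EuclideanSpace ℝ (Fin d)))
    (hfin : m {ξ : EuclideanSpace ℝ (Fin d) | 1 < ‖ξ‖} < ⊤)
    (hlog : IntegrableOn (fun ξ : EuclideanSpace ℝ (Fin d) => Real.log ‖ξ‖)
      {ξ : EuclideanSpace ℝ (Fin d) | 1 < ‖ξ‖} m)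
    (ψ : ℝ → EuclideanSpace ℂ (Fin d))
    (hdecay : ∀ s : ℝ, 0 ≤ s → ‖ψ s‖ ≤ c₁ * Real.exp (-c₂ * s))
    (hre : ∀ s : ℝ, 0 ≤ s → ∀ ξ : EuclideanSpace ℝ (Fin d), 1 < ‖ξ‖ →
      (∑ i, (ξ i : ℂ) * ψ s i).re ≤ 0) :
    (∫ s in Set.Ioi (0:ℝ), ∫ ξ in {ξ : EuclideanSpace ℝ (Fin d) | 1 < ‖ξ‖},
        ‖Complex.exp (∑ i, (ξ i : ℂ) * ψ s i) - 1‖ ∂m) ≤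
      c₁ / c₂ * (m {ξ : EuclideanSpace ℝ (Fin d) | 1 < ‖ξ‖}).toReal +
        2 / c₂ * ∫ ξ in {ξ : EuclideanSpace ℝ (Fin d) | 1 < ‖ξ‖}, Real.log ‖ξ‖ ∂m := by
  set A := {ξ : EuclideanSpace ℝ (Fin d) | 1 < ‖ξ‖}
  set B := c₁ / c₂ * (m A).toReal + 2 / c₂ * ∫ ξ in A, Real.log ‖ξ‖ ∂m
  set F := fun s (ξ : EuclideanSpace ℝ (Fin d)) => ‖Complex.exp (∑ i, (ξ i : ℂ) * ψ s i) - 1‖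
  have hA : MeasurableSet A := measurableSet_lt measurable_const measurable_norm
  have hB : 0 ≤ B := by
    have : 0 ≤ ∫ ξ in A, Real.log ‖ξ‖ ∂m :=
      setIntegral_nonneg hA fun ξ hξ => Real.log_nonneg hξ.le
    positivity
  have hpointwise : ∀ s ∈ Ioi (0 : ℝ), ∀ ξ ∈ A,
      ‖F s ξ‖ₑ ≤ ENNReal.ofReal (min 2 (c₁ * ‖ξ‖ * Real.exp (-c₂ * s))) := by
    intro s hs ξ hξ
    rw [enorm_norm, ← ofReal_norm]
    refine ENNReal.ofReal_le_ofReal <| (EuclideanSpace.norm_cexp_sum_ofReal_mul_sub_one_le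
      (hre s hs.le ξ hξ)).trans (min_le_min_left _ ?_)
    calc ‖ξ‖ * ‖ψ s‖ ≤ ‖ξ‖ * (c₁ * Real.exp (-c₂ * s)) := by gcongr; exact hdecay s hs.le
      _ = c₁ * ‖ξ‖ * Real.exp (-c₂ * s) := by ring
  suffices ‖∫ s in Ioi 0, ∫ ξ in A, F s ξ ∂m‖ₑ ≤ ENNReal.ofReal B by
    rw [← ofReal_norm, ENNReal.ofReal_le_ofReal_iff hB] at this
    exact (Real.le_norm_self _).trans this
  calc _ ≤ ∫⁻ s in Ioi 0, ∫⁻ ξ in A, ‖F s ξ‖ₑ ∂m :=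
        enorm_integral_integral_le_lintegral_lintegral_enorm F
    _ ≤ ∫⁻ s in Ioi 0, ∫⁻ ξ in A, ENNReal.ofReal (min 2 (c₁ * ‖ξ‖ * Real.exp (-c₂ * s))) ∂m :=
        setLIntegral_mono' measurableSet_Ioi fun s hs => setLIntegral_mono' hA (hpointwise s hs)
    _ ≤ ∫⁻ ξ in A, ENNReal.ofReal (c₁ / c₂ + 2 / c₂ * Real.log ‖ξ‖) ∂m := by
        have : IsFiniteMeasure (m.restrict A) := isFiniteMeasure_restrict.2 hfin.ne
        exact lintegral_Ioi_lintegral_ofReal_min_two_mul_exp_neg_le hc₁.le hc₂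
          (ae_restrict_of_forall_mem hA fun ξ hξ => le_of_lt hξ)
    _ = ENNReal.ofReal B :=
        setLIntegral_ofReal_const_add_mul hA hfin.ne hlog fun ξ hξ =>
          add_nonneg (by positivity) (mul_nonneg (by positivity) (Real.log_nonneg hξ.le))

/-- Integrated big-jump estimate: under exponential decay of `ψ` and a `log`-moment
condition on the measure `m` outside the unit ball, the double integral of
`|e^{⟨ξ,ψ(s)⟩} - 1|` is bounded by `(c₁/c₂) m({‖ξ‖>1}) + (2/c₂) ∫ log‖ξ‖ dm`. -/
theorem stmt6 (d : ℕ) (c₁ c₂ : ℝ) (hc₁ : 0 < c₁) (hc₂ : 0 < c₂)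
    (m : Measure (EuclideanSpace ℝ (Fin d))) (hm0 : m {0} = 0)
    (hfin : m {ξ : EuclideanSpace ℝ (Fin d) | 1 < ‖ξ‖} < ⊤)
    (hlog : IntegrableOn (fun ξ : EuclideanSpace ℝ (Fin d) => Real.log ‖ξ‖)
      {ξ : EuclideanSpace ℝ (Fin d) | 1 < ‖ξ‖} m)
    (ψ : ℝ → EuclideanSpace ℂ (Fin d)) (hψ : Measurable ψ)
    (hdecay : ∀ s : ℝ, 0 ≤ s → ‖ψ s‖ ≤ c₁ * Real.exp (-c₂ * s))
    (hre : ∀ s : ℝ, 0 ≤ s → ∀ ξ : EuclideanSpace ℝ (Fin d), 1 < ‖ξ‖ →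
      (∑ i, (ξ i : ℂ) * ψ s i).re ≤ 0) :
    (∫ s in Set.Ioi (0:ℝ), ∫ ξ in {ξ : EuclideanSpace ℝ (Fin d) | 1 < ‖ξ‖},
        ‖Complex.exp (∑ i, (ξ i : ℂ) * ψ s i) - 1‖ ∂m) ≤
      c₁ / c₂ * (m {ξ : EuclideanSpace ℝ (Fin d) | 1 < ‖ξ‖}).toReal +
        2 / c₂ * ∫ ξ in {ξ : EuclideanSpace ℝ (Fin d) | 1 < ‖ξ‖}, Real.log ‖ξ‖ ∂m :=
  stmt6_general d c₁ c₂ hc₁ hc₂ m hfin hlog ψ hdecay hre
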